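/- Let v ∈ ℂ^n, u ∈ ℤ^n, and b ∈ ℂ^n with b_j ≠ 0 for every j. Then the polynomial [v+u+sb]_{u₊} ∈ ℂ[s] is nonzero and ord_s([v+u+sb]_{u₊}) = |nsupp(v) \ nsupp(v+u)|. (Corollary 5.2 (2).) -/

import Mathlib

open scoped Classical

/-- The negative support of `v`: indices where `v i` is a negative integer. -/
noncomputable def nsupp {n : ℕ} (v : Fin n → ℂ) : Finset (Fin n) :=
  Finset.univ.filter (fun i => ∃ m : ℤ, m < 0 ∧ v i = (m : ℂ))

/-- The falling factorial `[v]_u = ∏_i ∏_{k=0}^{u_i - 1} (v_i - k)`. -/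
noncomputable def ffall {n : ℕ} (v : Fin n → ℂ) (u : Fin n → ℕ) : ℂ :=
  ∏ i, ∏ k ∈ Finset.range (u i), (v i - (k : ℂ))

/-- The reduced falling factorial: the product of the nonzero factors of `[v]_u`. -/
noncomputable def redffall {n : ℕ} (v : Fin n → ℂ) (u : Fin n → ℕ) : ℂ :=
  ∏ i, ∏ k ∈ (Finset.range (u i)).filter (fun k : ℕ => v i - (k : ℂ) ≠ 0), (v i - (k : ℂ))

/-- The polynomial `[v + s b]_u = ∏_i ∏_{k=0}^{u_i - 1} (v_i - k + s b_i)` in `ℂ[s]`. -/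
noncomputable def pertFF {n : ℕ} (v b : Fin n → ℂ) (u : Fin n → ℕ) : Polynomial ℂ :=
  ∏ i, ∏ k ∈ Finset.range (u i),
    (Polynomial.C (v i - (k : ℂ)) + Polynomial.C (b i) * Polynomial.X)

/-! Each factor `(v_i + u_i - k) + s b_i` with `b_i ≠ 0` is nonzero, and has order one at
`s = 0` when `v_i + u_i = k` and order zero otherwise, so the order of the product counts the
pairs `(i, k)` with `k < u_i` and `v_i + u_i = k`. For each `i` there is at most one such `k`,
and there is one exactly when `v_i ∈ {-u_i, …, -1}`, i.e. when `v_i` is a negative integer and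
`v_i + u_i` is not. -/

open Polynomial Finset

section Polynomial

variable {R : Type*}

theorem C_add_C_mul_X_ne_zero [Semiring R] {a b : R} (hb : b ≠ 0) : C a + C b * X ≠ 0 :=
  fun h => hb (by simpa using congrArg (coeff · 1) h)

theorem natTrailingDegree_C_add_C_mul_X [Semiring R] {a b : R} (hb : b ≠ 0) :
    (C a + C b * X).natTrailingDegree = if a = 0 then 1 else 0 := by
  split_ifs with ha
  · rw [ha, C_0, zero_add, C_mul_X_eq_monomial, natTrailingDegree_monomial hb]
  · exact natTrailingDegree_eq_zero.2 (.inr (by simpa using ha))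

variable [CommSemiring R] [NoZeroDivisors R] [Nontrivial R]

theorem natTrailingDegree_prod {ι : Type*} (s : Finset ι) (f : ι → R[X])
    (hf : ∀ i ∈ s, f i ≠ 0) :
    (∏ i ∈ s, f i).natTrailingDegree = ∑ i ∈ s, (f i).natTrailingDegree := by
  classical
  induction s using Finset.induction with
  | empty => simp
  | insert a s ha ih =>
    have hf' : ∀ i ∈ s, f i ≠ 0 := fun i hi => hf i (mem_insert_of_mem hi)
    rw [prod_insert ha, sum_insert ha,
      natTrailingDegree_mul (hf a (mem_insert_self a s)) (prod_ne_zero_iff.2 hf'), ih hf']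

end Polynomial

theorem pertFF_ne_zero {n : ℕ} (v b : Fin n → ℂ) (u : Fin n → ℕ) (hb : ∀ j, b j ≠ 0) :
    pertFF v b u ≠ 0 :=
  prod_ne_zero_iff.2 fun i _ => prod_ne_zero_iff.2 fun _ _ => C_add_C_mul_X_ne_zero (hb i)

theorem natTrailingDegree_pertFF {n : ℕ} (v b : Fin n → ℂ) (u : Fin n → ℕ)
    (hb : ∀ j, b j ≠ 0) :
    (pertFF v b u).natTrailingDegree = ∑ i, #{k ∈ range (u i) | v i = (k : ℕ)} := by
  rw [pertFF, natTrailingDegree_prod _ _ fun i _ =>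
    prod_ne_zero_iff.2 fun _ _ => C_add_C_mul_X_ne_zero (hb i)]
  refine sum_congr rfl fun i _ => ?_
  rw [natTrailingDegree_prod _ _ fun _ _ => C_add_C_mul_X_ne_zero (hb i), card_filter]
  simp only [natTrailingDegree_C_add_C_mul_X (hb i), sub_eq_zero]

section CharZero

variable {K : Type*} [CommRing K] [CharZero K]

theorem exists_lt_toNat_add_eq_natCast_iff (w : K) (u : ℤ) :
    (∃ k < u.toNat, w + u = k) ↔
      (∃ m : ℤ, m < 0 ∧ w = m) ∧ ¬∃ m : ℤ, m < 0 ∧ w + u = m := by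
  constructor
  · rintro ⟨k, hk, hwk⟩
    refine ⟨⟨k - u, by omega, by push_cast; linear_combination hwk⟩, ?_⟩
    rintro ⟨m, hm, hwm⟩
    have : (k : ℤ) = m := by exact_mod_cast hwk.symm.trans hwm
    omega
  · rintro ⟨⟨m, hm, rfl⟩, hnot⟩
    have hmu : 0 ≤ m + u := by
      by_contra! h
      exact hnot ⟨m + u, h, by push_cast; ring⟩
    refine ⟨(m + u).toNat, by omega, ?_⟩
    rw [← Int.cast_natCast, Int.toNat_of_nonneg hmu]
    push_cast
    ring

theorem card_filter_range_toNat_add_eq_natCast (w : K) (u : ℤ) :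
    #{k ∈ range u.toNat | w + u = (k : ℕ)} =
      if (∃ m : ℤ, m < 0 ∧ w = m) ∧ ¬∃ m : ℤ, m < 0 ∧ w + u = m then 1 else 0 := by
  have hle : #{k ∈ range u.toNat | w + u = (k : ℕ)} ≤ 1 :=
    card_le_one.2 fun k hk l hl => by
      exact_mod_cast (mem_filter.1 hk).2.symm.trans (mem_filter.1 hl).2
  split_ifs with h <;> rw [← exists_lt_toNat_add_eq_natCast_iff] at h
  · obtain ⟨k, hk, hwk⟩ := h
    exact le_antisymm hle (card_pos.2 ⟨k, mem_filter.2 ⟨mem_range.2 hk, hwk⟩⟩)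
  · exact card_eq_zero.2 (filter_eq_empty_iff.2 fun k hk hwk => h ⟨k, mem_range.1 hk, hwk⟩)

end CharZero

theorem ord_pertFF_posPart_general {n : ℕ} (v b : Fin n → ℂ) (u : Fin n → ℤ)
    (hb : ∀ j, b j ≠ 0) :
    pertFF (fun i => v i + ((u i : ℤ) : ℂ)) b (fun i => (u i).toNat) ≠ 0 ∧
    (pertFF (fun i => v i + ((u i : ℤ) : ℂ)) b (fun i => (u i).toNat)).natTrailingDegree =
      (nsupp v \ nsupp (fun i => v i + ((u i : ℤ) : ℂ))).card := by
  refine ⟨pertFF_ne_zero _ _ _ hb, ?_⟩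
  simp only [natTrailingDegree_pertFF _ _ _ hb, card_filter_range_toNat_add_eq_natCast]
  rw [sum_boole, Nat.cast_id]
  congr 1
  ext i
  simp [nsupp]

/-- Corollary 5.2 (2): if `b_j ≠ 0` for all `j`, then `[v+u+sb]_{u₊}` is a
nonzero polynomial with `ord_s([v+u+sb]_{u₊}) = |nsupp(v) \ nsupp(v+u)|`. -/
theorem ord_pertFF_posPart {n : ℕ} (hn : 0 < n) (v b : Fin n → ℂ) (u : Fin n → ℤ)
    (hb : ∀ j, b j ≠ 0) :
    pertFF (fun i => v i + ((u i : ℤ) : ℂ)) b (fun i => (u i).toNat) ≠ 0 ∧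
    (pertFF (fun i => v i + ((u i : ℤ) : ℂ)) b (fun i => (u i).toNat)).natTrailingDegree =
      (nsupp v \ nsupp (fun i => v i + ((u i : ℤ) : ℂ))).card :=
  ord_pertFF_posPart_general v b u hb
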